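/- arXiv:1309.0970 — 4 statements merged into one kernel-verified Lean document; each statement's English description precedes it below -/
import Mathlib

section
/- For the one-dimensional RW with geometric absorption, the absorption probabilities P_n = (1 − α)·X_n satisfy Σ_{n∈ℤ} P_n = 1, where X_n = C·ξ₁^n for n ≤ 0 and X_n = C·ξ₂^n for n ≥ 0. -/
/-!
With `a = qα` and `c = pα`, the numbers `ξ₂ < ξ₁` are the roots of `a ξ² - ξ + c`, which is
positive at `0` and negative at `1` (as `a + c = α < 1`), so `0 < ξ₂ < 1 < ξ₁`. The total mass is
then a pair of geometric series, `C ((1 - ξ₂)⁻¹ + (ξ₁ - 1)⁻¹)`, and by Vieta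
`(1 - ξ₂)(ξ₁ - 1) = (1 - a - c) / a` and `ξ₁ - ξ₂ = √D / a`; as `C = 1 / √D` this gives `1 / (1 - α)`.
-/

open Real

theorem hasSum_zpow_two_sided {K : Type*} [NormedField K] {r R : K} (hr : ‖r‖ < 1)
    (hR : 1 < ‖R‖) :
    HasSum (fun n : ℤ => if n ≤ 0 then R ^ n else r ^ n) ((1 - r)⁻¹ + (R - 1)⁻¹) := by
  have hR₀ : R ≠ 0 := norm_pos_iff.mp (one_pos.trans hR)
  have hR₁ : R - 1 ≠ 0 := sub_ne_zero.mpr (by rintro rfl; simp at hR)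
  have hRinv : ‖R⁻¹‖ < 1 := by rw [norm_inv]; exact inv_lt_one_of_one_lt₀ hR
  refine HasSum.of_nat_of_neg_add_one ?nonneg ?neg
  case nonneg =>
    convert hasSum_geometric_of_norm_lt_one hr using 2 with n
    rcases n.eq_zero_or_pos with rfl | hn
    · simp
    · simp [hn.ne', zpow_natCast]
  case neg =>
    have hgeom : R⁻¹ * (1 - R⁻¹)⁻¹ = (R - 1)⁻¹ := by field_simp
    rw [← hgeom]
    refine ((hasSum_geometric_of_norm_lt_one hRinv).mul_left R⁻¹).congr_fun fun n => ?_
    rw [if_pos (by omega), ← pow_succ', inv_pow, ← zpow_natCast, ← zpow_neg]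
    push_cast; rfl

section QuadraticRoots

variable {a c : ℝ}

theorem sqrt_one_sub_four_mul_lt_one (ha : 0 < a) (hc : 0 < c) : √(1 - 4 * a * c) < 1 := by
  rw [sqrt_lt' one_pos]
  nlinarith [mul_pos ha hc]

theorem abs_one_sub_two_mul_lt_sqrt (ha : 0 < a) (hac : a + c < 1) :
    |1 - 2 * a| < √(1 - 4 * a * c) := by
  rw [← sqrt_sq_eq_abs]
  apply sqrt_lt_sqrt (sq_nonneg _)
  nlinarith

theorem one_sub_sqrt_div_mem_Ioo (ha : 0 < a) (hc : 0 < c) (hac : a + c < 1) :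
    (1 - √(1 - 4 * a * c)) / (2 * a) ∈ Set.Ioo 0 1 := by
  have hlt := sqrt_one_sub_four_mul_lt_one ha hc
  have hgt := (abs_lt.mp (abs_one_sub_two_mul_lt_sqrt ha hac)).2
  constructor
  · exact div_pos (by linarith) (by positivity)
  · rw [div_lt_one (by positivity)]; linarith

theorem one_lt_one_add_sqrt_div (ha : 0 < a) (hac : a + c < 1) :
    1 < (1 + √(1 - 4 * a * c)) / (2 * a) := by
  have hgt := (abs_lt.mp (abs_one_sub_two_mul_lt_sqrt ha hac)).1
  rw [one_lt_div (by positivity)]; linarith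

theorem inv_one_sub_add_inv_sub_one_of_sq_eq {s : ℝ} (ha : a ≠ 0) (hac : a + c ≠ 1)
    (hs : s ^ 2 = 1 - 4 * a * c) :
    (1 - (1 - s) / (2 * a))⁻¹ + ((1 + s) / (2 * a) - 1)⁻¹ = s / (1 - a - c) := by
  have hprod : (2 * a - 1 + s) * (1 + s - 2 * a) = 4 * a * (1 - a - c) := by
    linear_combination hs
  have hne : (2 * a - 1 + s) * (1 + s - 2 * a) ≠ 0 := by
    rw [hprod]; exact mul_ne_zero (by positivity) (by intro h; apply hac; linarith)
  have h₁ : 2 * a - 1 + s ≠ 0 := left_ne_zero_of_mul hne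
  have h₂ : 1 + s - 2 * a ≠ 0 := right_ne_zero_of_mul hne
  have h₃ : 1 - a - c ≠ 0 := by intro h; apply hac; linarith
  have e₁ : 1 - (1 - s) / (2 * a) = (2 * a - 1 + s) / (2 * a) := by field_simp; ring
  have e₂ : (1 + s) / (2 * a) - 1 = (1 + s - 2 * a) / (2 * a) := by field_simp
  rw [e₁, e₂, inv_div, inv_div]
  field_simp
  linear_combination -s * hs

end QuadraticRoots

theorem rpow_neg_one_div_two_eq_inv_sqrt {x : ℝ} (hx : 0 ≤ x) : x ^ (-(1:ℝ)/2) = (√x)⁻¹ := by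
  rw [sqrt_eq_rpow, ← rpow_neg hx, neg_div]

theorem total_absorption_probability_one (p q α : ℝ) (hp : 0 < p) (hq : 0 < q)
    (hpq : p + q = 1) (hα0 : 0 < α) (hα1 : α < 1)
    (C ξ₁ ξ₂ : ℝ)
    (hC : C = (1 - 4 * p * q * α ^ 2) ^ (-(1:ℝ)/2))
    (hξ₁ : ξ₁ = (1 + Real.sqrt (1 - 4 * p * q * α ^ 2)) / (2 * q * α))
    (hξ₂ : ξ₂ = (1 - Real.sqrt (1 - 4 * p * q * α ^ 2)) / (2 * q * α))
    (X : ℤ → ℝ)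
    (hX : ∀ n : ℤ, X n = if n ≤ 0 then C * ξ₁ ^ n else C * ξ₂ ^ n) :
    ∑' n : ℤ, (1 - α) * X n = 1 := by
  have hdisc : 1 - 4 * p * q * α ^ 2 = 1 - 4 * (q * α) * (p * α) := by ring
  have hdenom : 2 * q * α = 2 * (q * α) := by ring
  rw [hdisc, hdenom] at hξ₁ hξ₂
  rw [hdisc] at hC
  have ha : 0 < q * α := mul_pos hq hα0
  have hc : 0 < p * α := mul_pos hp hα0
  have hac : q * α + p * α = α := by linear_combination α * hpq
  have hac₁ : q * α + p * α < 1 := by linarith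
  have hs : 0 < √(1 - 4 * (q * α) * (p * α)) :=
    (abs_nonneg _).trans_lt (abs_one_sub_two_mul_lt_sqrt ha hac₁)
  have hξ₂_mem := one_sub_sqrt_div_mem_Ioo ha hc hac₁
  have hsum : HasSum (fun n => (1 - α) * X n) ((1 - α) * (C * ((1 - ξ₂)⁻¹ + (ξ₁ - 1)⁻¹))) := by
    simp_rw [hX, ← mul_ite]
    refine ((hasSum_zpow_two_sided ?_ ?_).mul_left C).mul_left (1 - α)
    · rw [hξ₂, Real.norm_of_nonneg hξ₂_mem.1.le]
      exact hξ₂_mem.2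
    · rw [hξ₁, Real.norm_eq_abs]
      exact (one_lt_one_add_sqrt_div ha hac₁).trans_le (le_abs_self _)
  rw [hsum.tsum_eq, hC, hξ₁, hξ₂, inv_one_sub_add_inv_sub_one_of_sq_eq ha.ne' hac₁.ne
    (sq_sqrt (sqrt_pos.mp hs).le), rpow_neg_one_div_two_eq_inv_sqrt (sqrt_pos.mp hs).le, sub_sub, hac]
  have hα : 1 - α ≠ 0 := sub_ne_zero.mpr hα1.ne'
  generalize √(1 - 4 * (q * α) * (p * α)) = s at hs ⊢
  field_simp
end

section
/- Let 0 < α < 1/3, b = 1/(2√((1+α)(1−3α))), d = 1/(2√((1−α)(1+3α))), and μ₂ = (1 − α − √((1+α)(1−3α)))/(2α), μ₄ = (1 + α − √((1−α)(1+3α)))/(2α). Define f, g : ℤ → ℝ by f_n = b·μ₂^{|n|} + d·μ₄^{|n|} and g_n = b·μ₂^{|n|} − d·μ₄^{|n|}. Then f and g satisfy f_n = δ(n,0) + α(f_{n−1} + f_{n+1} + g_n) and g_n = α(g_{n−1} + g_{n+1} + f_n) for all integers n. -/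
/-!
Writing `f = p + q` and `g = p - q`, the coupled system splits into two decoupled equations on `ℤ`:
`(1 - α) p = δ/2 + α (p(n-1) + p(n+1))` and `(1 + α) q = δ/2 + α (q(n-1) + q(n+1))`.
Each is solved by `c μ^|n|`, where `μ` is the small root of `α μ² - λ μ + α = 0`; away from `0` this is
the characteristic equation, and at `0` the jump `λ - 2αμ = √(λ² - 4α²)` is absorbed by `c = 1/(2√(λ² - 4α²))`.
-/

section GeometricGreen

variable {R : Type*} [CommRing R]

theorem natAbs_pow_neighbours {α lam μ : R} (hμ : α * μ ^ 2 + α = lam * μ) {n : ℤ} (hn : n ≠ 0) :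
    α * (μ ^ (n - 1).natAbs + μ ^ (n + 1).natAbs) = lam * μ ^ n.natAbs := by
  have step (m : ℕ) : α * (μ ^ m + μ ^ (m + 2)) = lam * μ ^ (m + 1) := by
    linear_combination μ ^ m * hμ
  rcases hn.lt_or_gt with hneg | hpos
  · have e₀ : n.natAbs = (n + 1).natAbs + 1 := by omega
    have e₁ : (n - 1).natAbs = (n + 1).natAbs + 2 := by omega
    rw [e₀, e₁, add_comm (μ ^ _), step]
  · have e₀ : n.natAbs = (n - 1).natAbs + 1 := by omega
    have e₁ : (n + 1).natAbs = (n - 1).natAbs + 2 := by omega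
    rw [e₀, e₁, step]

theorem natAbs_pow_green {α lam μ c a : R} (hμ : α * μ ^ 2 + α = lam * μ)
    (hc : c * (lam - 2 * α * μ) = a) (n : ℤ) :
    lam * (c * μ ^ n.natAbs) =
      (if n = 0 then a else 0) + α * (c * μ ^ (n - 1).natAbs + c * μ ^ (n + 1).natAbs) := by
  by_cases hn : n = 0
  · subst hn
    simp only [if_true, Int.natAbs_zero, zero_sub, zero_add, Int.natAbs_neg, Int.natAbs_one, pow_zero,
      pow_one]
    linear_combination hc
  · rw [if_neg hn]
    linear_combination -c * natAbs_pow_neighbours hμ hn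

end GeometricGreen

section SmallRoot

variable {K : Type*} [Field K] [NeZero (2 : K)]

theorem root_of_sq_eq_discrim {α lam s μ : K} (hα : α ≠ 0) (hs : s ^ 2 = lam ^ 2 - 4 * α ^ 2)
    (hμ : μ = (lam - s) / (2 * α)) :
    α * μ ^ 2 + α = lam * μ ∧ lam - 2 * α * μ = s := by
  have hdiscrim : discrim α (-lam) α = s * s := by rw [discrim]; linear_combination -hs
  have hroot := (quadratic_eq_zero_iff hα hdiscrim μ).2 (.inr (by rw [hμ, neg_neg]))
  refine ⟨by linear_combination hroot, ?_⟩
  rw [hμ, mul_div_cancel₀ _ (mul_ne_zero two_ne_zero hα)]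
  ring

theorem natAbs_pow_green_of_sq_eq_discrim {α lam s μ c : K} (hα : α ≠ 0) (hs₀ : s ≠ 0)
    (hs : s ^ 2 = lam ^ 2 - 4 * α ^ 2) (hμ : μ = (lam - s) / (2 * α)) (hc : c = 1 / (2 * s))
    (n : ℤ) :
    lam * (c * μ ^ n.natAbs) =
      (if n = 0 then 1 / 2 else 0) + α * (c * μ ^ (n - 1).natAbs + c * μ ^ (n + 1).natAbs) := by
  obtain ⟨hroot, hjump⟩ := root_of_sq_eq_discrim hα hs hμ
  refine natAbs_pow_green hroot ?_ n
  rw [hjump, hc]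
  field_simp

end SmallRoot

theorem two_level_walk_solution (α : ℝ) (hα0 : 0 < α) (hα1 : α < 1 / 3)
    (b d μ₂ μ₄ : ℝ)
    (hb : b = 1 / (2 * Real.sqrt ((1 + α) * (1 - 3 * α))))
    (hd : d = 1 / (2 * Real.sqrt ((1 - α) * (1 + 3 * α))))
    (hμ₂ : μ₂ = (1 - α - Real.sqrt ((1 + α) * (1 - 3 * α))) / (2 * α))
    (hμ₄ : μ₄ = (1 + α - Real.sqrt ((1 - α) * (1 + 3 * α))) / (2 * α))
    (f g : ℤ → ℝ)
    (hf : ∀ n : ℤ, f n = b * μ₂ ^ n.natAbs + d * μ₄ ^ n.natAbs)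
    (hg : ∀ n : ℤ, g n = b * μ₂ ^ n.natAbs - d * μ₄ ^ n.natAbs) :
    (∀ n : ℤ, f n = (if n = 0 then 1 else 0) + α * (f (n - 1) + f (n + 1) + g n)) ∧
    (∀ n : ℤ, g n = α * (g (n - 1) + g (n + 1) + f n)) := by
  have hs : 0 < (1 + α) * (1 - 3 * α) := by nlinarith
  have ht : 0 < (1 - α) * (1 + 3 * α) := by nlinarith
  have hp := natAbs_pow_green_of_sq_eq_discrim (lam := 1 - α) hα0.ne' (Real.sqrt_pos.2 hs).ne'
    (by rw [Real.sq_sqrt hs.le]; ring) hμ₂ hb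
  have hq := natAbs_pow_green_of_sq_eq_discrim (lam := 1 + α) hα0.ne' (Real.sqrt_pos.2 ht).ne'
    (by rw [Real.sq_sqrt ht.le]; ring) hμ₄ hd
  refine ⟨fun n ↦ ?_, fun n ↦ ?_⟩
  · have hpn := hp n
    have hqn := hq n
    rw [hf, hf, hf, hg]
    split_ifs at hpn hqn ⊢ <;> linear_combination hpn + hqn
  · rw [hg, hg, hg, hf]
    linear_combination hp n - hq n
end

section
/- For the two-level walk, the total absorption probability is 1: (1 − 3α)·Σ_{n∈ℤ}(f_n + g_n) = 1, where f_n + g_n = 2b·μ₂^{|n|}. -/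
theorem two_level_total_absorption_one (α : ℝ) (hα0 : 0 < α) (hα1 : α < 1 / 3)
    (b d μ₂ μ₄ : ℝ)
    (hb : b = 1 / (2 * Real.sqrt ((1 + α) * (1 - 3 * α))))
    (hd : d = 1 / (2 * Real.sqrt ((1 - α) * (1 + 3 * α))))
    (hμ₂ : μ₂ = (1 - α - Real.sqrt ((1 + α) * (1 - 3 * α))) / (2 * α))
    (hμ₄ : μ₄ = (1 + α - Real.sqrt ((1 - α) * (1 + 3 * α))) / (2 * α))
    (f g : ℤ → ℝ)
    (hf : ∀ n : ℤ, f n = b * μ₂ ^ n.natAbs + d * μ₄ ^ n.natAbs)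
    (hg : ∀ n : ℤ, g n = b * μ₂ ^ n.natAbs - d * μ₄ ^ n.natAbs) :
    (∀ n : ℤ, f n + g n = 2 * b * μ₂ ^ n.natAbs) ∧
    (1 - 3 * α) * ∑' n : ℤ, (f n + g n) = 1 := by
  have h1 : ∀ n : ℤ, f n + g n = 2 * b * μ₂ ^ n.natAbs := fun n => by
    rw [hf, hg]; ring
  refine ⟨h1, ?_⟩
  set s := Real.sqrt ((1 + α) * (1 - 3 * α)) with hs
  have h3 : (0:ℝ) < 1 - 3 * α := by linarith
  have hprod : 0 < (1 + α) * (1 - 3 * α) := by nlinarith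
  have hs0 : 0 < s := Real.sqrt_pos.mpr hprod
  have hs2 : s ^ 2 = (1 + α) * (1 - 3 * α) := Real.sq_sqrt hprod.le
  have hslt : s < 1 - α := by nlinarith
  have hsgt : 1 - 3 * α < s := by nlinarith
  have hμ0 : 0 < μ₂ := by
    rw [hμ₂]; exact div_pos (by linarith) (by linarith)
  have hμ1 : μ₂ < 1 := by
    rw [hμ₂, div_lt_one (by linarith)]; linarith
  have hgeo : Summable (fun n : ℕ => μ₂ ^ n) :=
    summable_geometric_of_lt_one hμ0.le hμ1
  have hsum1 : Summable (fun n : ℕ => 2 * b * μ₂ ^ ((n : ℤ)).natAbs) := by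
    simpa using hgeo.mul_left (2 * b)
  have hF2 : (fun n : ℕ => 2 * b * μ₂ ^ ((-(n + 1) : ℤ)).natAbs)
      = fun n : ℕ => (2 * b * μ₂) * μ₂ ^ n := by
    funext n
    have h : ((-(n + 1) : ℤ)).natAbs = n + 1 := by omega
    rw [h, pow_succ]; ring
  have hsum2 : Summable (fun n : ℕ => 2 * b * μ₂ ^ ((-(n + 1) : ℤ)).natAbs) := by
    rw [hF2]; exact hgeo.mul_left _
  have habs : ∑' n : ℤ, 2 * b * μ₂ ^ n.natAbs
      = (∑' n : ℕ, 2 * b * μ₂ ^ ((n : ℤ)).natAbs)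
        + ∑' n : ℕ, 2 * b * μ₂ ^ ((-(n + 1) : ℤ)).natAbs :=
    tsum_of_nat_of_neg_add_one hsum1 hsum2
  have hμne : (1:ℝ) - μ₂ ≠ 0 := by linarith
  have hA : (∑' n : ℕ, 2 * b * μ₂ ^ ((n : ℤ)).natAbs) = 2 * b * (1 - μ₂)⁻¹ := by
    have : (fun n : ℕ => 2 * b * μ₂ ^ ((n : ℤ)).natAbs) = fun n : ℕ => 2 * b * μ₂ ^ n := by
      funext n; simp
    rw [this, tsum_mul_left, tsum_geometric_of_lt_one hμ0.le hμ1]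
  have hB : (∑' n : ℕ, 2 * b * μ₂ ^ ((-(n + 1) : ℤ)).natAbs) = 2 * b * μ₂ * (1 - μ₂)⁻¹ := by
    rw [hF2, tsum_mul_left, tsum_geometric_of_lt_one hμ0.le hμ1]
  have hts : ∑' n : ℤ, (f n + g n) = ∑' n : ℤ, 2 * b * μ₂ ^ n.natAbs := tsum_congr h1
  rw [hts, habs, hA, hB]
  have hαne : (2*α : ℝ) ≠ 0 := by positivity
  have hμeq : 2*α*μ₂ = 1 - α - s := by rw [hμ₂]; field_simp
  have key : (1-3*α)*(1+μ₂) = s*(1-μ₂) := by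
    have key2 : 2*α*((1-3*α)*(1+μ₂)) = 2*α*(s*(1-μ₂)) := by
      linear_combination (1-3*α+s)*hμeq - hs2
    exact mul_left_cancel₀ hαne key2
  have hbs : 2*b*s = 1 := by rw [hb]; field_simp
  field_simp
  linear_combination 2*b*key + (1-μ₂)*hbs
end

section
/- Let 0 < α < 1/(2n). If X, Y : ℤⁿ → ℝ are two nonnegative solutions of X_u = δ(u,0) + Σ_{k=1}^n α(X_{u−[k]} + X_{u+[k]}) both tending to 0 at infinity, then X = Y. -/
theorem inhomogeneous_solution_unique (n : ℕ) (hn : 1 ≤ n) (α : ℝ)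
    (hα0 : 0 < α) (hα1 : α < 1 / (2 * n))
    (X Y : (Fin n → ℤ) → ℝ)
    (hXnonneg : ∀ u, 0 ≤ X u) (hYnonneg : ∀ u, 0 ≤ Y u)
    (hXeq : ∀ u : Fin n → ℤ,
      X u = (if u = 0 then 1 else 0) + ∑ k : Fin n,
        α * (X (u - fun i => if i = k then 1 else 0) + X (u + fun i => if i = k then 1 else 0)))
    (hYeq : ∀ u : Fin n → ℤ,
      Y u = (if u = 0 then 1 else 0) + ∑ k : Fin n,
        α * (Y (u - fun i => if i = k then 1 else 0) + Y (u + fun i => if i = k then 1 else 0)))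
    (hXdecay : Filter.Tendsto X Filter.cofinite (nhds 0))
    (hYdecay : Filter.Tendsto Y Filter.cofinite (nhds 0)) :
    X = Y := by
  set Z : (Fin n → ℤ) → ℝ := fun u => X u - Y u with hZ
  have hZeq : ∀ u : Fin n → ℤ,
      Z u = ∑ k : Fin n,
        α * (Z (u - fun i => if i = k then 1 else 0) + Z (u + fun i => if i = k then 1 else 0)) := by
    intro u
    have := hXeq u
    have := hYeq u
    simp only [hZ]
    rw [hXeq u, hYeq u, add_sub_add_left_eq_sub, ← Finset.sum_sub_distrib]
    exact Finset.sum_congr rfl fun k _ => by ring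
  have hZtendsto : Filter.Tendsto (fun u => |Z u|) Filter.cofinite (nhds 0) := by
    have h := hXdecay.sub hYdecay
    have h2 : Filter.Tendsto Z Filter.cofinite (nhds 0) := by
      simpa [hZ] using h
    simpa using h2.abs
  -- boundedness
  have hfin : {u : Fin n → ℤ | ¬ |Z u| < 1}.Finite := by
    have h := hZtendsto.eventually (eventually_lt_nhds one_pos)
    exact Filter.eventually_cofinite.mp h
  have hbdd : BddAbove (Set.range fun u => |Z u|) := by
    obtain ⟨C, hC⟩ := (hfin.image fun u => |Z u|).bddAbove
    refine ⟨max C 1, ?_⟩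
    rintro x ⟨u, rfl⟩
    by_cases h : |Z u| < 1
    · exact le_max_of_le_right h.le
    · exact le_max_of_le_left (hC ⟨u, h, rfl⟩)
  set M : ℝ := ⨆ u, |Z u| with hM
  have hle : ∀ u, |Z u| ≤ M := fun u => le_ciSup hbdd u
  have hM0 : 0 ≤ M := le_trans (abs_nonneg _) (hle 0)
  have hkey : ∀ u, |Z u| ≤ (2 * n * α) * M := by
    intro u
    rw [hZeq u]
    calc |∑ k : Fin n, α * (Z (u - fun i => if i = k then 1 else 0)
            + Z (u + fun i => if i = k then 1 else 0))|
        ≤ ∑ k : Fin n, |α * (Z (u - fun i => if i = k then 1 else 0)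
            + Z (u + fun i => if i = k then 1 else 0))| := Finset.abs_sum_le_sum_abs _ _
      _ ≤ ∑ k : Fin n, α * (2 * M) := by
          apply Finset.sum_le_sum
          intro k _
          rw [abs_mul, abs_of_pos hα0]
          have := (abs_add_le (Z (u - fun i => if i = k then 1 else 0))
            (Z (u + fun i => if i = k then 1 else 0)))
          have h1 := hle (u - fun i => if i = k then 1 else 0)
          have h2 := hle (u + fun i => if i = k then 1 else 0)
          nlinarith
      _ = (2 * n * α) * M := by
          rw [Finset.sum_const, Finset.card_univ, Fintype.card_fin]
          push_cast
          ring
  have hMle : M ≤ (2 * n * α) * M := ciSup_le hkey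
  have hn' : (0 : ℝ) < 2 * n := by positivity
  have h2nα : 2 * n * α < 1 := by
    rw [lt_div_iff₀ hn'] at hα1
    linarith
  have hMzero : M = 0 := by nlinarith
  funext u
  have : |Z u| ≤ 0 := hMzero ▸ hle u
  have : Z u = 0 := abs_nonpos_iff.mp this
  simpa [hZ, sub_eq_zero] using this
end
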